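/- There is a bijection between the set of rooted binary phylogenetic trees on a fixed ordered leaf set of size n and the set of integer vectors (a_1, ..., a_{n-1}) with -(i-1) ≤ a_i ≤ i-1 for each i, given by the Ordered Leaf Attachment encoding. -/

import Mathlib

open scoped Classical

namespace OLA

/-- Rooted binary phylogenetic trees with `ℕ`-labeled leaves. -/
inductive BTree where
  | leaf (x : ℕ)
  | node (l r : BTree)
deriving DecidableEq

namespace BTree

def leafList : BTree → List ℕ
  | .leaf x => [x]
  | .node l r => leafList l ++ leafList r

def leafSet (t : BTree) : Finset ℕ := t.leafList.toFinset

/-- `t` is a phylogenetic tree on the leaf set `{0, …, n-1}`. -/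
def IsPhylo (t : BTree) (n : ℕ) : Prop :=
  t.leafList.Nodup ∧ t.leafSet = Finset.range n

def minLeaf : BTree → ℕ
  | .leaf x => x
  | .node l r => min (minLeaf l) (minLeaf r)

/-- OLA index of the root of a (sub)tree: leaf label, or minus the second
smallest of the minimal leaves of the two children. -/
def idx : BTree → ℤ
  | .leaf x => (x : ℤ)
  | .node l r => -(max (minLeaf l) (minLeaf r) : ℤ)

/-- Restriction `T^i` of `t` to the leaves labeled `≤ i` (suppressing
degree-2 nodes); `none` if no such leaf exists. -/
def restrictLe : BTree → ℕ → Option BTree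
  | .leaf x, i => if x ≤ i then some (.leaf x) else none
  | .node l r, i =>
    match restrictLe l i, restrictLe r i with
    | some l', some r' => some (.node l' r')
    | some l', none => some l'
    | none, some r' => some r'
    | none, none => none

/-- Restriction `T|_S` of `t` to the leaves in `S` (suppressing degree-2 nodes). -/
def restrictTo : BTree → Finset ℕ → Option BTree
  | .leaf x, S => if x ∈ S then some (.leaf x) else none
  | .node l r, S =>
    match restrictTo l S, restrictTo r S with
    | some l', some r' => some (.node l' r')
    | some l', none => some l'
    | none, some r' => some r'
    | none, none => none

/-- OLA index of the sibling of the leaf labeled `i`, if it exists. -/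
def siblingIdx : BTree → ℕ → Option ℤ
  | .leaf _, _ => none
  | .node l r, i =>
    if l = .leaf i then some r.idx
    else if r = .leaf i then some l.idx
    else (siblingIdx l i).orElse (fun _ => siblingIdx r i)

/-- The OLA vector entry of `t` at position `i ≥ 1`: the index of the sibling
of leaf `i` in the restriction of `t` to leaves `0, …, i`. -/
def olaEntry (t : BTree) (i : ℕ) : ℤ :=
  ((t.restrictLe i).bind (fun t' => t'.siblingIdx i)).getD 0

def relabel (f : ℕ → ℕ) : BTree → BTree
  | .leaf x => .leaf (f x)
  | .node l r => .node (relabel f l) (relabel f r)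

/-- The set of clusters (leaf sets of rooted subtrees) of `t`.  Two leaf-labeled
trees over the same leaf set are isomorphic iff their cluster sets coincide. -/
def clusters : BTree → Set (Set ℕ)
  | .leaf x => {{x}}
  | .node l r => insert {y | y ∈ (node l r).leafList} (clusters l ∪ clusters r)

def subtreeAt : BTree → List Bool → Option BTree
  | t, [] => some t
  | .leaf _, _ :: _ => none
  | .node l _, false :: p => subtreeAt l p
  | .node _ r, true :: p => subtreeAt r p

/-- `w` occurs as a rooted subtree (i.e. the subtree below a node) of `t`. -/
def IsNode (t w : BTree) : Prop := ∃ p, t.subtreeAt p = some w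

/-- The position of the least common ancestor of the leaves in `S`. -/
def lcaPos : BTree → Finset ℕ → List Bool
  | .leaf _, _ => []
  | .node l r, S =>
    if S ⊆ l.leafSet then false :: lcaPos l S
    else if S ⊆ r.leafSet then true :: lcaPos r S
    else []

/-- Positions of the nodes of the minimal spanning subtree `T(S)`. -/
def spanNodes (t : BTree) (S : Finset ℕ) : Set (List Bool) :=
  {p | t.lcaPos S <+: p ∧ ∃ u, t.subtreeAt p = some u ∧ ∃ x ∈ S, x ∈ u.leafList}

end BTree

/-- OLA vector of tree `t` under the leaf ordering `σ` (leaf `x` is the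
`σ x`-th leaf in the order). -/
def ola (t : BTree) (σ : Equiv.Perm ℕ) (i : ℕ) : ℤ :=
  (t.relabel σ).olaEntry i

/-- `σ` is a valid leaf ordering of the leaf set `{0, …, n-1}`. -/
def IsOrdering (σ : Equiv.Perm ℕ) (n : ℕ) : Prop := ∀ x < n, σ x < n

/-- The set of (corrected) mismatched indices among `{1, …, i}` of a family of
OLA vectors: an index is mismatched if two of the vectors differ there, or if
all vectors place that leaf above the internal node created by an
already-mismatched leaf. -/
noncomputable def mismatch {ι : Type*} (v : ι → ℕ → ℤ) : ℕ → Finset ℕ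
  | 0 => ∅
  | i + 1 =>
    let M := mismatch v i
    if (∃ a b : ι, v a (i+1) ≠ v b (i+1)) ∨ (∃ j ∈ M, ∀ a : ι, v a (i+1) = -(j : ℤ))
    then insert (i+1) M else M

/-- Corrected OLA distance of a family of OLA vectors of trees on `n` leaves. -/
noncomputable def corrDist {ι : Type*} (v : ι → ℕ → ℤ) (n : ℕ) : ℕ :=
  (mismatch v (n-1)).card

/-- Hamming OLA distance: the number of indices where at least two vectors differ. -/
noncomputable def hamDist {ι : Type*} (v : ι → ℕ → ℤ) (n : ℕ) : ℕ :=
  ((Finset.Icc 1 (n-1)).filter fun i => ∃ a b : ι, v a i ≠ v b i).card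

/-- `comp` is an agreement forest for the trees `ts` over leaf set `{0,…,n-1}`:
components have pairwise disjoint leaf sets partitioning the full leaf set,
each tree restricted to a component's leaves is isomorphic to the component,
and the spanning subtrees are node-disjoint in each tree. -/
def IsAF {ι : Type*} (ts : ι → BTree) (n : ℕ) {f : ℕ} (comp : Fin f → BTree) : Prop :=
  (∀ i, (comp i).leafList.Nodup) ∧
  (∀ i j, i ≠ j → Disjoint (comp i).leafSet (comp j).leafSet) ∧
  (Finset.univ.biUnion (fun i => (comp i).leafSet) = Finset.range n) ∧
  (∀ a i, ∃ c, (ts a).restrictTo (comp i).leafSet = some c ∧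
      c.clusters = (comp i).clusters) ∧
  (∀ a i j, i ≠ j →
      Disjoint (BTree.spanNodes (ts a) ((comp i).leafSet))
               (BTree.spanNodes (ts a) ((comp j).leafSet)))

/-- Edge of the inheritance graph: some tree has a directed path from the root
of the spanning subtree of component `i` down to that of component `j`. -/
def inhEdge {ι : Type*} (ts : ι → BTree) {f : ℕ} (comp : Fin f → BTree)
    (i j : Fin f) : Prop :=
  i ≠ j ∧ ∃ a, (BTree.lcaPos (ts a) ((comp i).leafSet)) <+:
      (BTree.lcaPos (ts a) ((comp j).leafSet))

/-- `comp` is an acyclic agreement forest for `ts`. -/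
def IsAAF {ι : Type*} (ts : ι → BTree) (n : ℕ) {f : ℕ} (comp : Fin f → BTree) : Prop :=
  IsAF ts n comp ∧ ∀ i, ¬ Relation.TransGen (inhEdge ts comp) i i

/-- Size of a maximum acyclic agreement forest (an AAF with fewest components). -/
noncomputable def maafSize {ι : Type*} (ts : ι → BTree) (n : ℕ) : ℕ :=
  sInf {f | ∃ comp : Fin f → BTree, IsAAF ts n comp}

/-!
Decoding: start from the leaf `0` and, for `i = 1, …, n - 1`, attach leaf `i` above the node
with index `a_i`. If the children of every node are sorted by their minimal leaf, the indices
of a tree on the leaves `0, …, i - 1` are the leaves themselves and the negatives of the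
non-minimal leaves, i.e. each integer in `[-(i - 1), i - 1]` exactly once; so every vector in
the box decodes to a sorted tree, whose OLA vector is the vector we started from. Conversely,
deleting the largest leaf of a sorted tree and attaching it again above its former sibling
gives the tree back, so decoding the OLA vector of a sorted tree recovers it. Sorting the
children changes neither the OLA vector nor the clusters, and sorted trees are determined by
their clusters, which makes the encoding a well-defined bijection on cluster sets.
-/

namespace BTree

lemma minLeaf_mem : ∀ t : BTree, t.minLeaf ∈ t.leafList
  | .leaf x => by simp [leafList, minLeaf]
  | .node l r => by
      rcases min_cases l.minLeaf r.minLeaf with ⟨h, _⟩ | ⟨h, _⟩ <;>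
        simp [leafList, minLeaf, h, minLeaf_mem l, minLeaf_mem r]

lemma minLeaf_le : ∀ t : BTree, ∀ x ∈ t.leafList, t.minLeaf ≤ x
  | .leaf y => by simp [leafList, minLeaf]
  | .node l r => by
      simp only [leafList, List.mem_append, minLeaf]
      rintro x (hx | hx)
      · exact (min_le_left _ _).trans (minLeaf_le l x hx)
      · exact (min_le_right _ _).trans (minLeaf_le r x hx)

lemma mem_leafList_iff {t : BTree} {n : ℕ} (ht : t.IsPhylo n) {x : ℕ} :
    x ∈ t.leafList ↔ x < n := by
  rw [← List.mem_toFinset, ← leafSet, ht.2, Finset.mem_range]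

def IsSorted : BTree → Prop
  | .leaf _ => True
  | .node l r => l.minLeaf < r.minLeaf ∧ IsSorted l ∧ IsSorted r

def idxList : BTree → List ℤ
  | .leaf x => [(x : ℤ)]
  | .node l r => idx (.node l r) :: (idxList l ++ idxList r)

lemma idx_mem_idxList : ∀ t : BTree, t.idx ∈ t.idxList
  | .leaf _ => List.mem_singleton_self _
  | .node _ _ => List.mem_cons_self

lemma idx_node_of_lt {l r : BTree} (h : l.minLeaf < r.minLeaf) :
    idx (.node l r) = -(r.minLeaf : ℤ) := by
  rw [idx, max_eq_right (by exact_mod_cast h.le)]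

lemma mem_idxList_iff : ∀ {t : BTree}, t.IsSorted → ∀ z : ℤ,
    z ∈ t.idxList ↔ z.natAbs ∈ t.leafList ∧ (z < 0 → z.natAbs ≠ t.minLeaf)
  | .leaf x, _, z => by
      simp only [idxList, leafList, minLeaf, List.mem_singleton]
      omega
  | .node l r, ⟨hlt, hl, hr⟩, z => by
      have hrmin := minLeaf_le r z.natAbs
      simp only [idxList, List.mem_cons, List.mem_append, mem_idxList_iff hl,
        mem_idxList_iff hr, idx_node_of_lt hlt, leafList, minLeaf, min_eq_left hlt.le]
      constructor
      · rintro (rfl | ⟨hz, hneg⟩ | ⟨hz, hneg⟩)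
        · exact ⟨Or.inr (by simpa using minLeaf_mem r), by omega⟩
        · exact ⟨Or.inl hz, hneg⟩
        · exact ⟨Or.inr hz, by have := hrmin hz; omega⟩
      · rintro ⟨hz | hz, hneg⟩
        · exact Or.inr (Or.inl ⟨hz, hneg⟩)
        · by_cases h : z = -(r.minLeaf : ℤ)
          · exact Or.inl h
          · exact Or.inr (Or.inr ⟨hz, by omega⟩)

lemma idxList_nodup : ∀ {t : BTree}, t.IsSorted → t.leafList.Nodup → t.idxList.Nodup
  | .leaf _, _, _ => List.nodup_singleton _
  | .node l r, hc, hnd => by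
      obtain ⟨hlt, hl, hr⟩ := hc
      rw [leafList, List.nodup_append'] at hnd
      obtain ⟨hndl, hndr, hdisj⟩ := hnd
      rw [idxList, List.nodup_cons, List.nodup_append', List.mem_append, idx_node_of_lt hlt,
        mem_idxList_iff hl, mem_idxList_iff hr]
      refine ⟨?_, idxList_nodup hl hndl, idxList_nodup hr hndr, ?_⟩
      · rintro (⟨h, -⟩ | ⟨-, h⟩)
        · exact hdisj (by simpa using h) (minLeaf_mem r)
        · exact h (by omega) (by simp)
      · intro z hzl hzr
        exact hdisj ((mem_idxList_iff hl z).mp hzl).1 ((mem_idxList_iff hr z).mp hzr).1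


lemma restrictLe_node (l r : BTree) (j : ℕ) :
    restrictLe (.node l r) j = Option.merge node (restrictLe l j) (restrictLe r j) := by
  simp only [restrictLe]
  cases restrictLe l j <;> cases restrictLe r j <;> rfl

lemma restrictLe_eq_none_iff : ∀ {t : BTree} {j : ℕ},
    restrictLe t j = none ↔ ∀ x ∈ t.leafList, j < x
  | .leaf x, j => by simp [restrictLe, leafList]
  | .node l r, j => by
      simp [restrictLe_node, Option.merge_eq_none_iff, restrictLe_eq_none_iff, leafList,
        or_imp, forall_and]

lemma exists_restrictLe_eq_some {t : BTree} {j x : ℕ} (hx : x ∈ t.leafList) (hxj : x ≤ j) :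
    ∃ t', restrictLe t j = some t' :=
  Option.ne_none_iff_exists'.mp fun h => (restrictLe_eq_none_iff.mp h x hx).not_ge hxj

lemma restrictLe_of_forall_le : ∀ {t : BTree} {j : ℕ}, (∀ x ∈ t.leafList, x ≤ j) →
    restrictLe t j = some t
  | .leaf x, j, h => by simp [restrictLe, h x (List.mem_singleton_self x)]
  | .node l r, j, h => by
      simp only [leafList, List.mem_append] at h
      rw [restrictLe_node, restrictLe_of_forall_le fun x hx => h x (.inl hx),
        restrictLe_of_forall_le fun x hx => h x (.inr hx), Option.merge_some_some]

lemma leafList_restrictLe : ∀ {t t' : BTree} {j : ℕ}, restrictLe t j = some t' →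
    t'.leafList = t.leafList.filter (· ≤ j)
  | .leaf x, t', j, h => by
      simp only [restrictLe] at h
      split_ifs at h with hx
      cases h
      simp [leafList, hx]
  | .node l r, t', j, h => by
      have hnil {u : BTree} (hu : restrictLe u j = none) : u.leafList.filter (· ≤ j) = [] :=
        List.filter_eq_nil_iff.mpr fun x hx => by
          simpa using restrictLe_eq_none_iff.mp hu x hx
      rw [restrictLe_node] at h
      rcases hl : restrictLe l j with _ | l' <;> rcases hr : restrictLe r j with _ | r' <;>
        simp only [hl, hr, Option.merge_none_left, Option.merge_none_right,
          Option.merge_some_some, reduceCtorEq, Option.some_inj] at h <;> subst h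
      · simp [leafList, List.filter_append, hnil hl, leafList_restrictLe hr]
      · simp [leafList, List.filter_append, hnil hr, leafList_restrictLe hl]
      · simp [leafList, List.filter_append, leafList_restrictLe hl, leafList_restrictLe hr]

lemma minLeaf_restrictLe {t t' : BTree} {j : ℕ} (h : restrictLe t j = some t') :
    t'.minLeaf = t.minLeaf := by
  have hsub : ∀ x ∈ t'.leafList, x ∈ t.leafList ∧ x ≤ j := by
    simp [leafList_restrictLe h]
  have hmin : t.minLeaf ∈ t'.leafList := by
    obtain ⟨hmem, hle⟩ := hsub _ (minLeaf_mem t')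
    rw [leafList_restrictLe h]
    simpa using ⟨minLeaf_mem t, (minLeaf_le t _ hmem).trans hle⟩
  exact le_antisymm (minLeaf_le t' _ hmin) (minLeaf_le t _ (hsub _ (minLeaf_mem t')).1)

lemma restrictLe_of_restrictLe : ∀ {t t' : BTree} {j k : ℕ}, restrictLe t k = some t' →
    j ≤ k → restrictLe t' j = restrictLe t j
  | .leaf x, t', j, k, h, _ => by
      simp only [restrictLe] at h
      split_ifs at h
      cases h
      rfl
  | .node l r, t', j, k, h, hjk => by
      have hnone {u : BTree} (hu : restrictLe u k = none) : restrictLe u j = none :=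
        restrictLe_eq_none_iff.mpr fun x hx => by
          have := restrictLe_eq_none_iff.mp hu x hx; omega
      rw [restrictLe_node] at h ⊢
      rcases hl : restrictLe l k with _ | l' <;> rcases hr : restrictLe r k with _ | r' <;>
        simp only [hl, hr, Option.merge_none_left, Option.merge_none_right,
          Option.merge_some_some, reduceCtorEq, Option.some_inj] at h <;> subst h
      · rw [hnone hl, restrictLe_of_restrictLe hr hjk, Option.merge_none_left]
      · rw [hnone hr, restrictLe_of_restrictLe hl hjk, Option.merge_none_right]
      · rw [restrictLe_node, restrictLe_of_restrictLe hl hjk, restrictLe_of_restrictLe hr hjk]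

lemma isSorted_restrictLe : ∀ {t t' : BTree} {j : ℕ}, t.IsSorted →
    restrictLe t j = some t' → t'.IsSorted
  | .leaf x, t', j, _, h => by
      simp only [restrictLe] at h
      split_ifs at h
      cases h
      trivial
  | .node l r, t', j, ⟨hlt, hcl, hcr⟩, h => by
      rw [restrictLe_node] at h
      rcases hl : restrictLe l j with _ | l' <;> rcases hr : restrictLe r j with _ | r' <;>
        simp only [hl, hr, Option.merge_none_left, Option.merge_none_right,
          Option.merge_some_some, reduceCtorEq, Option.some_inj] at h <;> subst h
      · exact isSorted_restrictLe hcr hr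
      · exact isSorted_restrictLe hcl hl
      · exact ⟨by rwa [minLeaf_restrictLe hl, minLeaf_restrictLe hr],
          isSorted_restrictLe hcl hl, isSorted_restrictLe hcr hr⟩

lemma isPhylo_restrictLe {t t' : BTree} {n j : ℕ} (ht : t.IsPhylo n) (hj : j < n)
    (h : restrictLe t j = some t') : t'.IsPhylo (j + 1) := by
  refine ⟨leafList_restrictLe h ▸ ht.1.filter _, Finset.ext fun x => ?_⟩
  simp only [leafSet, List.mem_toFinset, leafList_restrictLe h, List.mem_filter,
    mem_leafList_iff ht, decide_eq_true_eq, Finset.mem_range]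
  omega

lemma olaEntry_restrictLe {t t' : BTree} {j k : ℕ} (h : restrictLe t k = some t')
    (hjk : j ≤ k) : t'.olaEntry j = t.olaEntry j := by
  rw [olaEntry, olaEntry, restrictLe_of_restrictLe h hjk]

lemma olaEntry_eq_of_forall_le {t : BTree} {j : ℕ} (h : ∀ x ∈ t.leafList, x ≤ j) :
    t.olaEntry j = (t.siblingIdx j).getD 0 := by
  rw [olaEntry, restrictLe_of_forall_le h, Option.bind_some]

lemma siblingIdx_eq_none : ∀ {t : BTree} {m : ℕ}, m ∉ t.leafList → siblingIdx t m = none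
  | .leaf _, _, _ => rfl
  | .node l r, m, h => by
      simp only [leafList, List.mem_append, not_or] at h
      have hl : l ≠ .leaf m := by rintro rfl; simp [leafList] at h
      have hr : r ≠ .leaf m := by rintro rfl; simp [leafList] at h
      simp [siblingIdx, hl, hr, siblingIdx_eq_none h.1, siblingIdx_eq_none h.2]

lemma siblingIdx_node_of_not_mem_right {l r : BTree} {m : ℕ} (hl : l ≠ .leaf m)
    (hr : m ∉ r.leafList) : siblingIdx (.node l r) m = siblingIdx l m := by
  have hr' : r ≠ .leaf m := by rintro rfl; simp [leafList] at hr
  rw [siblingIdx, if_neg hl, if_neg hr', siblingIdx_eq_none hr]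
  cases siblingIdx l m <;> rfl

lemma siblingIdx_node_of_not_mem_left {l r : BTree} {m : ℕ} (hl : m ∉ l.leafList)
    (hr : r ≠ .leaf m) : siblingIdx (.node l r) m = siblingIdx r m := by
  have hl' : l ≠ .leaf m := by rintro rfl; simp [leafList] at hl
  rw [siblingIdx, if_neg hl', if_neg hr, siblingIdx_eq_none hl, Option.orElse_none]

lemma siblingIdx_mem_idxList : ∀ {t : BTree} {m : ℕ} {s : ℤ}, siblingIdx t m = some s →
    s ∈ t.idxList
  | .leaf _, _, _, h => nomatch h
  | .node l r, m, s, h => by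
      simp only [idxList, List.mem_cons, List.mem_append]
      rw [siblingIdx] at h
      split_ifs at h
      · exact .inr (.inr (Option.some_inj.mp h ▸ idx_mem_idxList r))
      · exact .inr (.inl (Option.some_inj.mp h ▸ idx_mem_idxList l))
      · cases hl : siblingIdx l m
        · rw [hl, Option.orElse_none] at h
          exact .inr (.inr (siblingIdx_mem_idxList h))
        · rw [hl, Option.orElse_some] at h
          exact .inr (.inl (siblingIdx_mem_idxList (hl.trans h)))

/-- In the trees this is applied to, the node indices are distinct, so exactly one node gets
the new leaf. -/
def insertAt (a : ℤ) (i : ℕ) : BTree → BTree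
  | .leaf x => if (x : ℤ) = a then .node (.leaf x) (.leaf i) else .leaf x
  | .node l r => if idx (.node l r) = a then .node (.node l r) (.leaf i)
      else .node (insertAt a i l) (insertAt a i r)

lemma insertAt_idx_self (t : BTree) (i : ℕ) : insertAt t.idx i t = .node t (.leaf i) := by
  cases t <;> simp [insertAt, idx]

lemma insertAt_of_not_mem : ∀ {t : BTree} {a : ℤ} (i : ℕ), a ∉ t.idxList →
    insertAt a i t = t
  | .leaf x, a, i, h => by
      simp only [idxList, List.mem_singleton] at h
      simp [insertAt, Ne.symm h]
  | .node l r, a, i, h => by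
      simp only [idxList, List.mem_cons, List.mem_append, not_or] at h
      simp [insertAt, Ne.symm h.1, insertAt_of_not_mem i h.2.1, insertAt_of_not_mem i h.2.2]

lemma insertAt_node_of_ne {l r : BTree} {a : ℤ} (i : ℕ) (h : idx (.node l r) ≠ a) :
    insertAt a i (.node l r) = .node (insertAt a i l) (insertAt a i r) :=
  if_neg h

lemma insertAt_eq_leaf : ∀ {t : BTree} {a : ℤ} {i y : ℕ}, insertAt a i t = .leaf y →
    t = .leaf y
  | .leaf x, a, i, y, h => by
      by_cases hx : (x : ℤ) = a <;> simp_all [insertAt]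
  | .node l r, a, i, y, h => by
      by_cases hx : idx (.node l r) = a <;> simp_all [insertAt]

lemma minLeaf_insertAt : ∀ {t : BTree} (a : ℤ) {i : ℕ}, (∀ x ∈ t.leafList, x < i) →
    minLeaf (insertAt a i t) = minLeaf t
  | .leaf x, a, i, h => by
      have := h x (List.mem_singleton_self x)
      by_cases hx : (x : ℤ) = a
      · simp [insertAt, hx, minLeaf, this.le]
      · simp [insertAt, hx]
  | .node l r, a, i, h => by
      have hm := h _ (minLeaf_mem (.node l r))
      simp only [leafList, List.mem_append] at h
      by_cases hx : idx (.node l r) = a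
      · simp only [insertAt, if_pos hx, minLeaf] at hm ⊢
        omega
      · rw [insertAt_node_of_ne i hx, minLeaf, minLeaf,
          minLeaf_insertAt a fun x hx => h x (.inl hx),
          minLeaf_insertAt a fun x hx => h x (.inr hx)]

lemma isSorted_insertAt : ∀ {t : BTree} (a : ℤ) {i : ℕ}, (∀ x ∈ t.leafList, x < i) →
    t.IsSorted → (insertAt a i t).IsSorted
  | .leaf x, a, i, h, _ => by
      by_cases hx : (x : ℤ) = a
      · simpa [insertAt, hx, IsSorted, minLeaf] using h x (List.mem_singleton_self x)
      · simp [insertAt, hx, IsSorted]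
  | .node l r, a, i, h, hc => by
      have hm := h _ (minLeaf_mem (.node l r))
      simp only [leafList, List.mem_append] at h
      by_cases hx : idx (.node l r) = a
      · simp only [insertAt, if_pos hx]
        exact ⟨hm, hc, trivial⟩
      · obtain ⟨hlt, hcl, hcr⟩ := hc
        rw [insertAt_node_of_ne i hx]
        refine ⟨?_, isSorted_insertAt a (fun x hx => h x (.inl hx)) hcl,
          isSorted_insertAt a (fun x hx => h x (.inr hx)) hcr⟩
        rwa [minLeaf_insertAt a fun x hx => h x (.inl hx),
          minLeaf_insertAt a fun x hx => h x (.inr hx)]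

lemma leafList_insertAt : ∀ {t : BTree} {a : ℤ} (i : ℕ), a ∈ t.idxList →
    t.idxList.Nodup → (insertAt a i t).leafList.Perm (i :: t.leafList)
  | .leaf x, a, i, ha, _ => by
      simp only [idxList, List.mem_singleton] at ha
      simp only [insertAt, if_pos ha.symm, leafList]
      exact List.Perm.swap i x []
  | .node l r, a, i, ha, hnd => by
      rw [idxList, List.nodup_cons, List.nodup_append'] at hnd
      obtain ⟨-, hndl, hndr, hdisj⟩ := hnd
      by_cases hx : idx (.node l r) = a
      · simp only [insertAt, if_pos hx, leafList]
        exact List.perm_append_comm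
      rw [insertAt_node_of_ne i hx]
      simp only [idxList, List.mem_cons, List.mem_append] at ha
      rcases ha with ha | ha | ha
      · exact absurd ha.symm hx
      · rw [insertAt_of_not_mem i fun h => hdisj ha h]
        exact (leafList_insertAt i ha hndl).append_right _
      · rw [insertAt_of_not_mem (t := l) i fun h => hdisj h ha]
        exact ((leafList_insertAt i ha hndr).append_left _).trans List.perm_middle

lemma siblingIdx_insertAt : ∀ {t : BTree} {a : ℤ} {i : ℕ}, i ∉ t.leafList →
    a ∈ t.idxList → t.idxList.Nodup → siblingIdx (insertAt a i t) i = some a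
  | .leaf x, a, i, hi, ha, _ => by
      simp only [idxList, List.mem_singleton] at ha
      simp only [leafList, List.mem_singleton] at hi
      simp [insertAt, siblingIdx, idx, ha, Ne.symm hi]
  | .node l r, a, i, hi, ha, hnd => by
      rw [idxList, List.nodup_cons, List.nodup_append'] at hnd
      obtain ⟨-, hndl, hndr, hdisj⟩ := hnd
      simp only [leafList, List.mem_append, not_or] at hi
      by_cases hx : idx (.node l r) = a
      · simp [insertAt, siblingIdx, hx]
      rw [insertAt_node_of_ne i hx]
      simp only [idxList, List.mem_cons, List.mem_append] at ha
      rcases ha with ha | ha | ha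
      · exact absurd ha.symm hx
      · rw [insertAt_of_not_mem i fun h => hdisj ha h,
          siblingIdx_node_of_not_mem_right (fun h => hi.1 (by simp [insertAt_eq_leaf h, leafList]))
            hi.2, siblingIdx_insertAt hi.1 ha hndl]
      · rw [insertAt_of_not_mem (t := l) i fun h => hdisj h ha,
          siblingIdx_node_of_not_mem_left hi.1
            (fun h => hi.2 (by simp [insertAt_eq_leaf h, leafList])),
          siblingIdx_insertAt hi.2 ha hndr]

lemma restrictLe_insertAt : ∀ {t : BTree} (a : ℤ) {i j : ℕ}, j < i →
    restrictLe (insertAt a i t) j = restrictLe t j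
  | .leaf x, a, i, j, hij => by
      by_cases hx : (x : ℤ) = a
      · by_cases hxj : x ≤ j <;> simp [insertAt, restrictLe, hx, hxj, hij.not_ge]
      · simp [insertAt, hx]
  | .node l r, a, i, j, hij => by
      by_cases hx : idx (.node l r) = a
      · have : restrictLe (.leaf i) j = none := by simp [restrictLe, hij.not_ge]
        rw [insertAt, if_pos hx, restrictLe_node _ (.leaf i), this, Option.merge_none_right]
      · rw [insertAt_node_of_ne i hx, restrictLe_node, restrictLe_insertAt a hij,
          restrictLe_insertAt a hij, restrictLe_node]

lemma restrictLe_of_not_mem {t : BTree} {n : ℕ} (hmax : ∀ x ∈ t.leafList, x ≤ n + 1)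
    (hn : n + 1 ∉ t.leafList) : restrictLe t n = some t :=
  restrictLe_of_forall_le fun x hx => by
    have := hmax x hx
    have : x ≠ n + 1 := fun e => hn (e ▸ hx)
    omega

lemma insertAt_node_restrictLe_left {l l' r : BTree} {s : ℤ} (i : ℕ) {j : ℕ}
    (hI : (BTree.node l r).idxList.Nodup) (hl : restrictLe l j = some l') (hs : s ∈ l.idxList) :
    insertAt s i (.node l' r) = .node (insertAt s i l') r := by
  rw [idxList, List.nodup_cons, List.nodup_append', List.mem_append, not_or] at hI
  have hidx : idx (.node l' r) = idx (.node l r) := by simp only [idx, minLeaf_restrictLe hl]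
  rw [insertAt_node_of_ne i fun e => hI.1.1 (hidx ▸ e ▸ hs),
    insertAt_of_not_mem i fun h => hI.2.2.2 hs h]

lemma insertAt_node_restrictLe_right {l r r' : BTree} {s : ℤ} (i : ℕ) {j : ℕ}
    (hI : (BTree.node l r).idxList.Nodup) (hr : restrictLe r j = some r') (hs : s ∈ r.idxList) :
    insertAt s i (.node l r') = .node l (insertAt s i r') := by
  rw [idxList, List.nodup_cons, List.nodup_append', List.mem_append, not_or] at hI
  have hidx : idx (.node l r') = idx (.node l r) := by simp only [idx, minLeaf_restrictLe hr]
  rw [insertAt_node_of_ne i fun e => hI.1.2 (hidx ▸ e ▸ hs),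
    insertAt_of_not_mem i fun h => hI.2.2.2 h hs]

lemma minLeaf_le_of_ne_leaf {t : BTree} {n : ℕ} (hnd : t.leafList.Nodup)
    (hmax : ∀ x ∈ t.leafList, x ≤ n + 1) (hn : n + 1 ∈ t.leafList)
    (ht : t ≠ .leaf (n + 1)) : t.minLeaf ≤ n := by
  cases t with
  | leaf y => simp_all [leafList]
  | node l r =>
      obtain ⟨-, -, hdisj⟩ := List.nodup_append'.mp hnd
      have hl := hmax _ (List.mem_append_left _ (minLeaf_mem l))
      have hr := hmax _ (List.mem_append_right _ (minLeaf_mem r))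
      have hne : l.minLeaf ≠ r.minLeaf := fun he => hdisj (minLeaf_mem l) (he ▸ minLeaf_mem r)
      simp only [minLeaf]
      omega

lemma exists_siblingIdx_insertAt_restrictLe : ∀ {t t' : BTree} {n : ℕ}, t.IsSorted →
    t.leafList.Nodup → n + 1 ∈ t.leafList → (∀ x ∈ t.leafList, x ≤ n + 1) →
    restrictLe t n = some t' → ∃ s, siblingIdx t (n + 1) = some s ∧ insertAt s (n + 1) t' = t
  | .leaf x, t', n, _, _, hn, _, h => by
      simp only [leafList, List.mem_singleton] at hn
      simp [restrictLe, ← hn] at h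
  | .node l r, t', n, hc, hnd, hn, hmax, h => by
      have hI := idxList_nodup hc hnd
      obtain ⟨hndl, hndr, hdisj⟩ := List.nodup_append'.mp hnd
      simp only [leafList, List.mem_append] at hn hmax
      rw [restrictLe_node] at h
      rcases hn with hn | hn
      · have hnr : n + 1 ∉ r.leafList := fun h => hdisj hn h
        have hne : l ≠ .leaf (n + 1) := by
          rintro rfl
          have : n + 1 < r.minLeaf := hc.1
          have := hmax _ (.inr (minLeaf_mem r))
          omega
        obtain ⟨l', hl⟩ := exists_restrictLe_eq_some (minLeaf_mem l)
          (minLeaf_le_of_ne_leaf hndl (fun x hx => hmax x (.inl hx)) hn hne)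
        rw [hl, restrictLe_of_not_mem (fun x hx => hmax x (.inr hx)) hnr,
          Option.merge_some_some, Option.some_inj] at h
        subst h
        obtain ⟨s, hs, hins⟩ := exists_siblingIdx_insertAt_restrictLe hc.2.1 hndl hn
          (fun x hx => hmax x (.inl hx)) hl
        refine ⟨s, by rw [siblingIdx_node_of_not_mem_right hne hnr, hs], ?_⟩
        rw [insertAt_node_restrictLe_left _ hI hl (siblingIdx_mem_idxList hs), hins]
      · have hnl : n + 1 ∉ l.leafList := fun h => hdisj h hn
        have hne : l ≠ .leaf (n + 1) := by rintro rfl; simp [leafList] at hnl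
        rw [restrictLe_of_not_mem (fun x hx => hmax x (.inl hx)) hnl] at h
        by_cases hrleaf : r = .leaf (n + 1)
        · subst hrleaf
          simp only [restrictLe, if_false, Nat.not_succ_le_self, Option.merge_none_right,
            Option.some_inj] at h
          subst h
          exact ⟨idx l, by simp [siblingIdx, hne], insertAt_idx_self _ _⟩
        obtain ⟨r', hr⟩ := exists_restrictLe_eq_some (minLeaf_mem r)
          (minLeaf_le_of_ne_leaf hndr (fun x hx => hmax x (.inr hx)) hn hrleaf)
        rw [hr, Option.merge_some_some, Option.some_inj] at h
        subst h
        obtain ⟨s, hs, hins⟩ := exists_siblingIdx_insertAt_restrictLe hc.2.2 hndr hn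
          (fun x hx => hmax x (.inr hx)) hr
        refine ⟨s, by rw [siblingIdx_node_of_not_mem_left hnl hrleaf, hs], ?_⟩
        rw [insertAt_node_restrictLe_right _ hI hr (siblingIdx_mem_idxList hs), hins]

lemma minLeaf_eq_zero_of_isPhylo {t : BTree} {k : ℕ} (ht : t.IsPhylo (k + 1)) : t.minLeaf = 0 :=
  Nat.le_zero.mp (minLeaf_le t 0 ((mem_leafList_iff ht).mpr k.succ_pos))

lemma mem_idxList_iff_natAbs_le {t : BTree} {k : ℕ} (hc : t.IsSorted)
    (ht : t.IsPhylo (k + 1)) (z : ℤ) : z ∈ t.idxList ↔ z.natAbs ≤ k := by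
  rw [mem_idxList_iff hc, mem_leafList_iff ht, minLeaf_eq_zero_of_isPhylo ht]
  omega

lemma isPhylo_insertAt {t : BTree} {k : ℕ} {a : ℤ} (hc : t.IsSorted) (ht : t.IsPhylo (k + 1))
    (ha : a.natAbs ≤ k) : (insertAt a (k + 1) t).IsPhylo (k + 2) := by
  have hperm := leafList_insertAt (k + 1) ((mem_idxList_iff_natAbs_le hc ht a).mpr ha)
    (idxList_nodup hc ht.1)
  have hnew : k + 1 ∉ t.leafList := fun h => ((mem_leafList_iff ht).mp h).false
  refine ⟨hperm.nodup_iff.mpr (List.nodup_cons.mpr ⟨hnew, ht.1⟩), ?_⟩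
  rw [leafSet, List.toFinset_eq_of_perm _ _ hperm, List.toFinset_cons, ← leafSet, ht.2,
    ← Finset.range_add_one]

/-- `a j` is the entry of leaf `j + 1`; the result has the leaves `0, …, k`. -/
def decode (a : ℕ → ℤ) : ℕ → BTree
  | 0 => .leaf 0
  | k + 1 => insertAt (a k) (k + 1) (decode a k)

lemma decode_congr {a b : ℕ → ℤ} {k : ℕ} (h : ∀ j < k, a j = b j) :
    decode a k = decode b k := by
  induction k with
  | zero => rfl
  | succ k ih => rw [decode, decode, h k k.lt_succ_self, ih fun j hj => h j (by omega)]

lemma isPhylo_and_isSorted_decode {a : ℕ → ℤ} {k : ℕ} (ha : ∀ j < k, (a j).natAbs ≤ j) :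
    (decode a k).IsPhylo (k + 1) ∧ (decode a k).IsSorted := by
  induction k with
  | zero => exact ⟨⟨List.nodup_singleton 0, rfl⟩, trivial⟩
  | succ k ih =>
      obtain ⟨ht, hc⟩ := ih fun j hj => ha j (by omega)
      exact ⟨isPhylo_insertAt hc ht (ha k k.lt_succ_self),
        isSorted_insertAt _ (fun x hx => (mem_leafList_iff ht).mp hx) hc⟩

lemma restrictLe_decode (a : ℕ → ℤ) {j k : ℕ} (hjk : j ≤ k) :
    restrictLe (decode a k) j = restrictLe (decode a j) j := by
  induction k, hjk using Nat.le_induction with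
  | base => rfl
  | succ k hjk ih => rw [decode, restrictLe_insertAt _ (by omega), ih]

lemma olaEntry_decode {a : ℕ → ℤ} {j k : ℕ} (ha : ∀ j < k, (a j).natAbs ≤ j)
    (hjk : j < k) : (decode a k).olaEntry (j + 1) = a j := by
  obtain ⟨ht, hc⟩ := isPhylo_and_isSorted_decode fun i (hi : i < j) => ha i (by omega)
  obtain ⟨ht', -⟩ := isPhylo_and_isSorted_decode fun i (hi : i < j + 1) => ha i (by omega)
  rw [olaEntry, restrictLe_decode a hjk,
    restrictLe_of_forall_le fun x hx => Nat.lt_succ_iff.mp ((mem_leafList_iff ht').mp hx),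
    Option.bind_some, decode, siblingIdx_insertAt (fun h => ((mem_leafList_iff ht).mp h).false)
      ((mem_idxList_iff_natAbs_le hc ht _).mpr (ha j hjk)) (idxList_nodup hc ht.1)]
  rfl

lemma insertAt_olaEntry_restrictLe {t t' : BTree} {n : ℕ} (hc : t.IsSorted)
    (ht : t.IsPhylo (n + 2)) (h : restrictLe t n = some t') :
    insertAt (t.olaEntry (n + 1)) (n + 1) t' = t := by
  have hle : ∀ x ∈ t.leafList, x ≤ n + 1 := fun x hx =>
    Nat.lt_succ_iff.mp ((mem_leafList_iff ht).mp hx)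
  obtain ⟨s, hs, hins⟩ := exists_siblingIdx_insertAt_restrictLe hc ht.1
    ((mem_leafList_iff ht).mpr (by omega)) hle h
  rwa [olaEntry_eq_of_forall_le hle, hs, Option.getD_some]

lemma decode_olaEntry {t : BTree} {k : ℕ} (hc : t.IsSorted) (ht : t.IsPhylo (k + 1)) :
    decode (fun j => t.olaEntry (j + 1)) k = t := by
  induction k generalizing t with
  | zero =>
      cases t with
      | leaf x =>
          rw [Nat.lt_one_iff.mp ((mem_leafList_iff ht).mp (List.mem_singleton_self x))]
          rfl
      | node l r =>
          have := (mem_leafList_iff ht).mp (List.mem_append_right _ (minLeaf_mem r))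
          have := hc.1
          omega
  | succ k ih =>
      obtain ⟨t', h⟩ :=
        exists_restrictLe_eq_some ((mem_leafList_iff ht).mpr (by omega)) k.zero_le
      have ht' := isPhylo_restrictLe ht (by omega) h
      have hc' := isSorted_restrictLe hc h
      rw [decode, decode_congr fun j hj => (olaEntry_restrictLe h hj).symm, ih hc' ht',
        insertAt_olaEntry_restrictLe hc ht h]

lemma natAbs_olaEntry_le_of_isSorted {t : BTree} {n : ℕ} (hc : t.IsSorted)
    (ht : t.IsPhylo (n + 2)) : (t.olaEntry (n + 1)).natAbs ≤ n := by
  obtain ⟨t', h⟩ := exists_restrictLe_eq_some ((mem_leafList_iff ht).mpr (by omega)) n.zero_le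
  have ht' := isPhylo_restrictLe ht (by omega) h
  have hins := insertAt_olaEntry_restrictLe hc ht h
  rw [← mem_idxList_iff_natAbs_le (isSorted_restrictLe hc h) ht']
  by_contra hnot
  rw [insertAt_of_not_mem _ hnot] at hins
  have hnew : n + 1 ∈ t'.leafList := hins ▸ (mem_leafList_iff ht).mpr (by omega)
  have := (mem_leafList_iff ht').mp hnew
  omega

def sort : BTree → BTree
  | .leaf x => .leaf x
  | .node l r => if l.minLeaf ≤ r.minLeaf then .node (sort l) (sort r)
      else .node (sort r) (sort l)

lemma leafList_sort : ∀ t : BTree, (sort t).leafList.Perm t.leafList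
  | .leaf _ => .refl _
  | .node l r => by
      rw [sort]
      split_ifs
      · exact (leafList_sort l).append (leafList_sort r)
      · exact ((leafList_sort r).append (leafList_sort l)).trans List.perm_append_comm

lemma minLeaf_sort : ∀ t : BTree, (sort t).minLeaf = t.minLeaf
  | .leaf _ => rfl
  | .node l r => by
      rw [sort]
      split_ifs <;> simp only [minLeaf, minLeaf_sort l, minLeaf_sort r, min_comm]

lemma idx_sort : ∀ t : BTree, (sort t).idx = t.idx
  | .leaf _ => rfl
  | .node l r => by
      rw [sort]
      split_ifs <;> simp only [idx, minLeaf_sort l, minLeaf_sort r, max_comm]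

lemma sort_eq_leaf_iff {t : BTree} {y : ℕ} : sort t = .leaf y ↔ t = .leaf y := by
  cases t with
  | leaf x => rfl
  | node l r => rw [sort]; split_ifs <;> simp

lemma isSorted_sort : ∀ {t : BTree}, t.leafList.Nodup → (sort t).IsSorted
  | .leaf _, _ => trivial
  | .node l r, hnd => by
      rw [leafList, List.nodup_append'] at hnd
      obtain ⟨hndl, hndr, hdisj⟩ := hnd
      have hne : l.minLeaf ≠ r.minLeaf := fun he => hdisj (minLeaf_mem l) (he ▸ minLeaf_mem r)
      rw [sort]
      split_ifs
      · exact ⟨by rw [minLeaf_sort, minLeaf_sort]; omega,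
          isSorted_sort hndl, isSorted_sort hndr⟩
      · exact ⟨by rw [minLeaf_sort, minLeaf_sort]; omega,
          isSorted_sort hndr, isSorted_sort hndl⟩

lemma isPhylo_sort {t : BTree} {n : ℕ} (ht : t.IsPhylo n) : (sort t).IsPhylo n :=
  ⟨(leafList_sort t).nodup_iff.mpr ht.1, by
    rw [leafSet, List.toFinset_eq_of_perm _ _ (leafList_sort t)]; exact ht.2⟩

lemma clusters_node_comm (l r : BTree) : clusters (.node r l) = clusters (.node l r) := by
  simp only [clusters, leafList, List.mem_append, or_comm, Set.union_comm]

lemma clusters_sort : ∀ t : BTree, (sort t).clusters = t.clusters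
  | .leaf _ => rfl
  | .node l r => by
      have hnode : clusters (.node (sort l) (sort r)) = clusters (.node l r) := by
        simp only [clusters, leafList, List.mem_append, (leafList_sort l).mem_iff,
          (leafList_sort r).mem_iff, clusters_sort l, clusters_sort r]
      rw [sort]
      split_ifs
      · exact hnode
      · rw [clusters_node_comm, hnode]

lemma restrictLe_sort : ∀ (t : BTree) (j : ℕ),
    restrictLe (sort t) j = (restrictLe t j).map sort
  | .leaf x, j => by
      by_cases hx : x ≤ j <;> simp [sort, restrictLe, hx]
  | .node l r, j => by
      rw [sort, restrictLe_node]
      by_cases h : l.minLeaf ≤ r.minLeaf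
      · rw [if_pos h, restrictLe_node, restrictLe_sort l, restrictLe_sort r]
        rcases hl : restrictLe l j with _ | l' <;> rcases hr : restrictLe r j with _ | r' <;>
          try rfl
        rw [Option.map_some, Option.map_some, Option.merge_some_some, Option.merge_some_some,
          Option.map_some, sort, if_pos (by rwa [minLeaf_restrictLe hl, minLeaf_restrictLe hr])]
      · rw [if_neg h, restrictLe_node, restrictLe_sort l, restrictLe_sort r]
        rcases hl : restrictLe l j with _ | l' <;> rcases hr : restrictLe r j with _ | r' <;>
          try rfl
        rw [Option.map_some, Option.map_some, Option.merge_some_some, Option.merge_some_some,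
          Option.map_some, sort, if_neg (by rwa [minLeaf_restrictLe hl, minLeaf_restrictLe hr])]

lemma siblingIdx_node_comm {l r : BTree} {m : ℕ} (hdisj : l.leafList.Disjoint r.leafList) :
    siblingIdx (.node r l) m = siblingIdx (.node l r) m := by
  by_cases hl : m ∈ l.leafList
  · have hr : m ∉ r.leafList := fun h => hdisj hl h
    have hr' : r ≠ .leaf m := by rintro rfl; simp [leafList] at hr
    by_cases hlm : l = .leaf m
    · simp [siblingIdx, hlm, hr']
    · rw [siblingIdx_node_of_not_mem_left hr hlm, siblingIdx_node_of_not_mem_right hlm hr]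
  · have hl' : l ≠ .leaf m := by rintro rfl; simp [leafList] at hl
    by_cases hrm : r = .leaf m
    · simp [siblingIdx, hrm, hl']
    · rw [siblingIdx_node_of_not_mem_right hrm hl, siblingIdx_node_of_not_mem_left hl hrm]

lemma siblingIdx_sort : ∀ {t : BTree} (m : ℕ), t.leafList.Nodup →
    siblingIdx (sort t) m = siblingIdx t m
  | .leaf _, _, _ => rfl
  | .node l r, m, hnd => by
      rw [leafList, List.nodup_append'] at hnd
      obtain ⟨hndl, hndr, hdisj⟩ := hnd
      rw [sort]
      split_ifs
      · simp only [siblingIdx, sort_eq_leaf_iff, idx_sort, siblingIdx_sort m hndl,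
          siblingIdx_sort m hndr]
      · rw [← siblingIdx_node_comm hdisj]
        simp only [siblingIdx, sort_eq_leaf_iff, idx_sort, siblingIdx_sort m hndl,
          siblingIdx_sort m hndr]

lemma olaEntry_sort {t : BTree} (hnd : t.leafList.Nodup) (j : ℕ) :
    (sort t).olaEntry j = t.olaEntry j := by
  rw [olaEntry, olaEntry, restrictLe_sort]
  rcases h : restrictLe t j with _ | u
  · rfl
  · rw [Option.map_some, Option.bind_some, Option.bind_some,
      siblingIdx_sort j (leafList_restrictLe h ▸ hnd.filter _)]

lemma subset_of_mem_clusters : ∀ {t : BTree} {c : Set ℕ}, c ∈ t.clusters →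
    c ⊆ {y | y ∈ t.leafList}
  | .leaf x, c, hc => by
      rw [clusters, Set.mem_singleton_iff] at hc
      simp [hc, leafList]
  | .node l r, c, hc => by
      rcases hc with rfl | hc | hc
      · exact subset_rfl
      · exact (subset_of_mem_clusters hc).trans fun y hy => List.mem_append_left _ hy
      · exact (subset_of_mem_clusters hc).trans fun y hy => List.mem_append_right _ hy

lemma nonempty_of_mem_clusters : ∀ {t : BTree} {c : Set ℕ}, c ∈ t.clusters → c.Nonempty
  | .leaf x, c, hc => by
      rw [clusters, Set.mem_singleton_iff] at hc
      exact hc ▸ Set.singleton_nonempty x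
  | .node l r, c, hc => by
      rcases hc with rfl | hc | hc
      · exact ⟨_, minLeaf_mem (.node l r)⟩
      · exact nonempty_of_mem_clusters hc
      · exact nonempty_of_mem_clusters hc

lemma leaves_mem_clusters : ∀ t : BTree, {y | y ∈ t.leafList} ∈ t.clusters
  | .leaf x => by simp [clusters, leafList]
  | .node _ _ => Set.mem_insert _ _

lemma sUnion_clusters (t : BTree) : ⋃₀ t.clusters = {y | y ∈ t.leafList} :=
  subset_antisymm (Set.sUnion_subset fun _ => subset_of_mem_clusters)
    (Set.subset_sUnion_of_mem (leaves_mem_clusters t))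

lemma clusters_left_eq {l r : BTree} (hdisj : l.leafList.Disjoint r.leafList) :
    l.clusters = {c ∈ (BTree.node l r).clusters | c ⊆ {y | y ∈ l.leafList}} := by
  ext c
  refine ⟨fun hc => ⟨.inr (.inl hc), subset_of_mem_clusters hc⟩, ?_⟩
  rintro ⟨rfl | hc | hc, hsub⟩
  · exact absurd (hsub (List.mem_append_right _ (minLeaf_mem r))) fun h => hdisj h (minLeaf_mem r)
  · exact hc
  · obtain ⟨y, hy⟩ := nonempty_of_mem_clusters hc
    exact absurd (subset_of_mem_clusters hc hy) (hdisj (hsub hy))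

lemma clusters_right_eq {l r : BTree} (hdisj : l.leafList.Disjoint r.leafList) :
    r.clusters = {c ∈ (BTree.node l r).clusters | c ⊆ {y | y ∈ r.leafList}} := by
  rw [← clusters_node_comm, clusters_left_eq hdisj.symm]

lemma clusters_node_ne_clusters_leaf {l r : BTree} (hdisj : l.leafList.Disjoint r.leafList)
    (x : ℕ) : (BTree.node l r).clusters ≠ (BTree.leaf x).clusters := by
  intro h
  have hx {u : BTree} (hu : {y | y ∈ u.leafList} ∈ (BTree.node l r).clusters) :
      x ∈ u.leafList := by
    rw [h, clusters, Set.mem_singleton_iff] at hu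
    exact (Set.ext_iff.mp hu x).mpr rfl
  exact hdisj (hx (.inr (.inl (leaves_mem_clusters l)))) (hx (.inr (.inr (leaves_mem_clusters r))))

lemma mem_leafList_iff_of_clusters_eq {t t' : BTree} (hC : t.clusters = t'.clusters) (y : ℕ) :
    y ∈ t.leafList ↔ y ∈ t'.leafList := by
  have := congrArg Set.sUnion hC
  rw [sUnion_clusters, sUnion_clusters] at this
  exact Set.ext_iff.mp this y

lemma minLeaf_eq_of_forall_mem_iff {t t' : BTree}
    (h : ∀ y, y ∈ t.leafList ↔ y ∈ t'.leafList) : t.minLeaf = t'.minLeaf :=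
  le_antisymm (minLeaf_le t _ ((h _).mpr (minLeaf_mem t')))
    (minLeaf_le t' _ ((h _).mp (minLeaf_mem t)))

/-- The leaf set of `l` is a cluster below the root containing the common minimal leaf, so it
lies in `l'`. -/
lemma leafList_left_subset {l r l' r' : BTree} (hdisj : l.leafList.Disjoint r.leafList)
    (hlt : l.minLeaf < r.minLeaf) (hlt' : l'.minLeaf < r'.minLeaf)
    (hC : (BTree.node l r).clusters = (BTree.node l' r').clusters) :
    ∀ y ∈ l.leafList, y ∈ l'.leafList := by
  have hL := mem_leafList_iff_of_clusters_eq hC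
  have hmin := minLeaf_eq_of_forall_mem_iff hL
  simp only [minLeaf, min_eq_left hlt.le, min_eq_left hlt'.le] at hmin
  have hmem : {y | y ∈ l.leafList} ∈ (BTree.node l' r').clusters :=
    hC ▸ Or.inr (.inl (leaves_mem_clusters l))
  rcases hmem with he | hc | hc
  · have hr : r.minLeaf ∈ l.leafList :=
      (Set.ext_iff.mp he _).mpr ((hL _).mp (List.mem_append_right _ (minLeaf_mem r)))
    exact absurd (minLeaf_mem r) (hdisj hr)
  · exact fun y hy => subset_of_mem_clusters hc hy
  · have := minLeaf_le r' _ (subset_of_mem_clusters hc (minLeaf_mem l))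
    omega

lemma eq_of_clusters_eq : ∀ {t t' : BTree}, t.IsSorted → t'.IsSorted →
    t.leafList.Nodup → t'.leafList.Nodup → t.clusters = t'.clusters → t = t'
  | .leaf x, .leaf y, _, _, _, _, hC => by
      have : ({x} : Set ℕ) ∈ (BTree.leaf y).clusters := hC ▸ rfl
      rw [clusters, Set.mem_singleton_iff, Set.singleton_eq_singleton_iff] at this
      rw [this]
  | .leaf x, .node l' r', _, _, _, hnd', hC =>
      absurd hC.symm (clusters_node_ne_clusters_leaf (List.nodup_append'.mp hnd').2.2 x)
  | .node l r, .leaf y, _, _, hnd, _, hC =>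
      absurd hC (clusters_node_ne_clusters_leaf (List.nodup_append'.mp hnd).2.2 y)
  | .node l r, .node l' r', ⟨hlt, hcl, hcr⟩, ⟨hlt', hcl', hcr'⟩, hnd, hnd', hC => by
      obtain ⟨hndl, hndr, hdisj⟩ := List.nodup_append'.mp hnd
      obtain ⟨hndl', hndr', hdisj'⟩ := List.nodup_append'.mp hnd'
      have hL := mem_leafList_iff_of_clusters_eq hC
      have hLl : {y | y ∈ l.leafList} = {y | y ∈ l'.leafList} := Set.ext fun y =>
        ⟨leafList_left_subset hdisj hlt hlt' hC y,
          leafList_left_subset hdisj' hlt' hlt hC.symm y⟩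
      have hLr : {y | y ∈ r.leafList} = {y | y ∈ r'.leafList} := Set.ext fun y => by
        have hy := hL y
        have hyl : y ∈ l.leafList ↔ y ∈ l'.leafList := Set.ext_iff.mp hLl y
        simp only [leafList, List.mem_append] at hy
        show y ∈ r.leafList ↔ y ∈ r'.leafList
        constructor
        · exact fun h => hy.mp (.inr h) |>.resolve_left fun h' => hdisj (hyl.mpr h') h
        · exact fun h => hy.mpr (.inr h) |>.resolve_left fun h' => hdisj' (hyl.mp h') h
      rw [eq_of_clusters_eq hcl hcl' hndl hndl'
          (by rw [clusters_left_eq hdisj, clusters_left_eq hdisj', hC, hLl]),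
        eq_of_clusters_eq hcr hcr' hndr hndr'
          (by rw [clusters_right_eq hdisj, clusters_right_eq hdisj', hC, hLr])]

lemma olaEntry_eq_of_clusters_eq {t t' : BTree} (hnd : t.leafList.Nodup)
    (hnd' : t'.leafList.Nodup) (hC : t.clusters = t'.clusters) : t.olaEntry = t'.olaEntry := by
  have hsort : sort t = sort t' :=
    eq_of_clusters_eq (isSorted_sort hnd) (isSorted_sort hnd')
      ((leafList_sort t).nodup_iff.mpr hnd) ((leafList_sort t').nodup_iff.mpr hnd')
      (by rw [clusters_sort, clusters_sort, hC])
  funext j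
  rw [← olaEntry_sort hnd, ← olaEntry_sort hnd', hsort]

lemma natAbs_olaEntry_le {t : BTree} {n j : ℕ} (ht : t.IsPhylo n) (hj : j + 1 < n) :
    (t.olaEntry (j + 1)).natAbs ≤ j := by
  have hsort := isPhylo_sort ht
  obtain ⟨u, h⟩ := exists_restrictLe_eq_some ((mem_leafList_iff hsort).mpr (by omega))
    (Nat.zero_le (j + 1))
  rw [← olaEntry_sort ht.1, ← olaEntry_restrictLe h le_rfl]
  exact natAbs_olaEntry_le_of_isSorted (isSorted_restrictLe (isSorted_sort ht.1) h)
    (isPhylo_restrictLe hsort hj h)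

lemma decode_olaEntry_eq_sort {t : BTree} {k : ℕ} (ht : t.IsPhylo (k + 1)) :
    decode (fun j => t.olaEntry (j + 1)) k = sort t := by
  simp_rw [← olaEntry_sort ht.1]
  exact decode_olaEntry (isSorted_sort ht.1) (isPhylo_sort ht)

end BTree

def extendByZero {m : ℕ} (a : Fin m → ℤ) (j : ℕ) : ℤ :=
  if h : j < m then a ⟨j, h⟩ else 0

lemma extendByZero_of_lt {m : ℕ} (a : Fin m → ℤ) {j : ℕ} (hj : j < m) :
    extendByZero a j = a ⟨j, hj⟩ :=
  dif_pos hj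

lemma natAbs_extendByZero_le {m : ℕ} {a : Fin m → ℤ}
    (ha : ∀ i : Fin m, -(i : ℤ) ≤ a i ∧ a i ≤ (i : ℤ)) (j : ℕ) (hj : j < m) :
    (extendByZero a j).natAbs ≤ j := by
  have : -(j : ℤ) ≤ a ⟨j, hj⟩ ∧ a ⟨j, hj⟩ ≤ j := ha ⟨j, hj⟩
  rw [extendByZero_of_lt a hj]
  omega

lemma isPhylo_decode_extendByZero {n : ℕ} (hn : 1 ≤ n) {a : Fin (n - 1) → ℤ}
    (ha : ∀ i : Fin (n - 1), -(i : ℤ) ≤ a i ∧ a i ≤ (i : ℤ)) :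
    (BTree.decode (extendByZero a) (n - 1)).IsPhylo n := by
  simpa only [Nat.sub_add_cancel hn] using
    (BTree.isPhylo_and_isSorted_decode (natAbs_extendByZero_le ha)).1

end OLA

open OLA in
/-- The OLA encoding is a bijection between rooted binary
phylogenetic trees on a fixed ordered leaf set of size `n` (up to isomorphism,
identified by their cluster sets) and integer vectors with `-(i-1) ≤ a_i ≤ i-1`. -/
theorem stmt1 (n : ℕ) (hn : 1 ≤ n) :
    ∃ e : {C : Set (Set ℕ) // ∃ t : BTree, t.IsPhylo n ∧ t.clusters = C} ≃
          {a : Fin (n-1) → ℤ // ∀ i : Fin (n-1), -(i : ℤ) ≤ a i ∧ a i ≤ (i : ℤ)},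
      ∀ (t : BTree) (ht : t.IsPhylo n) (i : Fin (n-1)),
        (e ⟨t.clusters, ⟨t, ht, rfl⟩⟩).1 i = t.olaEntry ((i : ℕ) + 1) := by
  have hn' : n - 1 + 1 = n := Nat.sub_add_cancel hn
  have hchoose {t : BTree} (ht : t.IsPhylo n)
      (h : ∃ t' : BTree, t'.IsPhylo n ∧ t'.clusters = t.clusters) :
      h.choose.olaEntry = t.olaEntry :=
    BTree.olaEntry_eq_of_clusters_eq h.choose_spec.1.1 ht.1 h.choose_spec.2
  refine ⟨{ toFun := fun C => ⟨fun i => C.2.choose.olaEntry (i + 1), fun i => ?_⟩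
            invFun := fun a => ⟨_, _, isPhylo_decode_extendByZero hn a.2, rfl⟩
            left_inv := fun C => Subtype.ext ?_
            right_inv := fun a => Subtype.ext (funext fun i => ?_) }, fun t ht i => ?_⟩
  · have := BTree.natAbs_olaEntry_le C.2.choose_spec.1 (by omega : (i : ℕ) + 1 < n)
    dsimp only
    omega
  · obtain ⟨ht, hC⟩ := C.2.choose_spec
    show (BTree.decode (extendByZero _) (n - 1)).clusters = C.1
    rw [BTree.decode_congr (b := fun j => C.2.choose.olaEntry (j + 1))
        fun j hj => extendByZero_of_lt _ hj,
      BTree.decode_olaEntry_eq_sort (hn'.symm ▸ ht), BTree.clusters_sort, hC]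
  · exact (congrFun (hchoose (isPhylo_decode_extendByZero hn a.2) _) (i + 1)).trans
      ((BTree.olaEntry_decode (natAbs_extendByZero_le a.2) i.2).trans (extendByZero_of_lt _ i.2))
  · exact congrFun (hchoose ht _) _
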